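/- arXiv:math/9905200 — 2 statements merged into one kernel-verified Lean document; each statement's English description precedes it below -/
import Mathlib

section
/- Let f(z) = 2/(a + 2^{3/2}√(1-z)) for a > 0, where √ denotes the principal branch with branch cut [1,∞), positive for real z < 1. Then f is analytic on the open unit disc and its Taylor coefficients c_n = f^{(n)}(0)/n! are all real and positive. -/
/-!
Put `u = √(1 - z)`, `x = 1 / u` and `y = 1 / (a + b u)`. Since `u' = -1 / (2u)`, these satisfy
`x' = x³ / 2` and `y' = (b / 2) x y²`, so differentiating a polynomial in `x, y` with nonnegative
coefficients gives another one. Starting from `c / (a + b u) = c y`, every derivative is such a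
polynomial, and it always keeps a monomial with positive coefficient and positive `y`-degree.
At `z = 0` we have `x = 1` and `y = 1 / (a + b) > 0`, so each derivative there is a positive real.
-/

open Set

lemma natCast_mul_pow_pred_mul {R : Type*} [Semiring R] (n : ℕ) (w : R) :
    (n : R) * w ^ (n - 1) * w = n * w ^ n := by
  rcases n.eq_zero_or_pos with rfl | hn
  · simp
  · rw [mul_assoc, pow_sub_one_mul hn.ne']

structure XYTerm where
  coeff : ℝ
  degX : ℕ
  degY : ℕ

namespace XYTerm

noncomputable section

variable {𝕜 : Type*} [RCLike 𝕜]

def eval (t : XYTerm) (x y : 𝕜) : 𝕜 := t.coeff * x ^ t.degX * y ^ t.degY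

def sumEval (L : List XYTerm) (x y : 𝕜) : 𝕜 := (L.map (·.eval x y)).sum

/-- The derivative of `c xⁱ yʲ` along any curve with `x' = x³ / 2` and `y' = (b / 2) x y²`. -/
def derivTerms (b : ℝ) (t : XYTerm) : List XYTerm :=
  [⟨t.coeff * t.degX / 2, t.degX + 2, t.degY⟩, ⟨t.coeff * t.degY * b / 2, t.degX + 1, t.degY + 1⟩]

def derivList (b : ℝ) (L : List XYTerm) : List XYTerm := L.flatMap (derivTerms b)

@[simp] lemma sumEval_nil (x y : 𝕜) : sumEval [] x y = 0 := rfl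

@[simp] lemma sumEval_cons (t : XYTerm) (L : List XYTerm) (x y : 𝕜) :
    sumEval (t :: L) x y = t.eval x y + sumEval L x y := rfl

lemma sumEval_append (L₁ L₂ : List XYTerm) (x y : 𝕜) :
    sumEval (L₁ ++ L₂) x y = sumEval L₁ x y + sumEval L₂ x y := by
  simp [sumEval]

lemma ofReal_sumEval (L : List XYTerm) (x y : ℝ) :
    ((sumEval L x y : ℝ) : 𝕜) = sumEval L (x : 𝕜) (y : 𝕜) := by
  induction L with
  | nil => simp
  | cons t L ih => simp [ih, eval]

section Derivative

variable {x y : 𝕜 → 𝕜} {z : 𝕜} {b : ℝ}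

lemma hasDerivAt_eval (hx : HasDerivAt x (x z ^ 3 / 2) z)
    (hy : HasDerivAt y (b / 2 * x z * y z ^ 2) z) (t : XYTerm) :
    HasDerivAt (fun w => t.eval (x w) (y w)) (sumEval (t.derivTerms b) (x z) (y z)) z := by
  refine (((hx.fun_pow t.degX).const_mul (t.coeff : 𝕜)).mul (hy.fun_pow t.degY)).congr_deriv ?_
  have hx' := natCast_mul_pow_pred_mul t.degX (x z)
  have hy' := natCast_mul_pow_pred_mul t.degY (y z)
  simp only [derivTerms, sumEval_cons, sumEval_nil, eval]
  push_cast
  linear_combination (t.coeff / 2 * x z ^ 2 * y z ^ t.degY : 𝕜) * hx' +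
    (t.coeff * b / 2 * x z ^ (t.degX + 1) * y z : 𝕜) * hy'

lemma hasDerivAt_sumEval (hx : HasDerivAt x (x z ^ 3 / 2) z)
    (hy : HasDerivAt y (b / 2 * x z * y z ^ 2) z) (L : List XYTerm) :
    HasDerivAt (fun w => sumEval L (x w) (y w)) (sumEval (derivList b L) (x z) (y z)) z := by
  induction L with
  | nil => exact hasDerivAt_const z 0
  | cons t L ih =>
    simpa only [derivList, List.flatMap_cons, sumEval_append, sumEval_cons]
      using (hasDerivAt_eval hx hy t).fun_add ih

end Derivative

theorem eqOn_iteratedDeriv {U : Set 𝕜} (hU : IsOpen U) {f x y : 𝕜 → 𝕜} {b : ℝ}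
    (hx : ∀ z ∈ U, HasDerivAt x (x z ^ 3 / 2) z)
    (hy : ∀ z ∈ U, HasDerivAt y (b / 2 * x z * y z ^ 2) z) {L : List XYTerm}
    (hf : EqOn f (fun z => sumEval L (x z) (y z)) U) (n : ℕ) :
    EqOn (iteratedDeriv n f) (fun z => sumEval ((derivList b)^[n] L) (x z) (y z)) U := by
  induction n with
  | zero => simpa using hf
  | succ n ih =>
    intro z hz
    rw [iteratedDeriv_succ, Function.iterate_succ_apply',
      (ih.eventuallyEq_of_mem (hU.mem_nhds hz)).deriv_eq]
    exact (hasDerivAt_sumEval (hx z hz) (hy z hz) _).deriv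

/-- A positive term of positive `y`-degree spawns another one under `derivList`. -/
def Admissible (L : List XYTerm) : Prop :=
  (∀ t ∈ L, 0 ≤ t.coeff) ∧ ∃ t ∈ L, 0 < t.coeff ∧ 0 < t.degY

namespace Admissible

variable {L : List XYTerm}

lemma derivList {b : ℝ} (hb : 0 < b) (hL : Admissible L) : Admissible (derivList b L) := by
  obtain ⟨hnonneg, t, ht, hct, hjt⟩ := hL
  refine ⟨fun s hs => ?_, ⟨t.coeff * t.degY * b / 2, t.degX + 1, t.degY + 1⟩, ?_, ?_,
    t.degY.succ_pos⟩
  · obtain ⟨r, hr, hs⟩ := List.mem_flatMap.mp hs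
    have hcr := hnonneg r hr
    simp only [derivTerms, List.mem_cons, List.not_mem_nil, or_false] at hs
    rcases hs with rfl | rfl <;> positivity
  · exact List.mem_flatMap.mpr ⟨t, ht, by simp [derivTerms]⟩
  · have : (0 : ℝ) < t.degY := by exact_mod_cast hjt
    positivity

lemma iterate_derivList {b : ℝ} (hb : 0 < b) (hL : Admissible L) (n : ℕ) :
    Admissible ((XYTerm.derivList b)^[n] L) := by
  induction n with
  | zero => exact hL
  | succ n ih => rw [Function.iterate_succ_apply']; exact ih.derivList hb

lemma sumEval_pos (hL : Admissible L) {x y : ℝ} (hx : 0 < x) (hy : 0 < y) :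
    0 < sumEval L x y := by
  obtain ⟨hnonneg, t, ht, hct, -⟩ := hL
  have hterms : ∀ s ∈ L.map (·.eval x y), 0 ≤ s := by
    simp only [List.mem_map, forall_exists_index, and_imp, forall_apply_eq_imp_iff₂]
    intro s hs
    have := hnonneg s hs
    unfold eval; positivity
  calc 0 < t.eval x y := by unfold eval; positivity
    _ ≤ sumEval L x y := List.single_le_sum hterms _ (List.mem_map_of_mem ht)

end Admissible

end

end XYTerm

open Complex Metric

lemma re_cpow_half_pos {w : ℂ} (hw : w ∈ slitPlane) : 0 < (w ^ (1 / 2 : ℂ)).re := by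
  have harg : arg w ∈ Ioo (-Real.pi) Real.pi :=
    ⟨neg_pi_lt_arg w, (arg_le_pi w).lt_of_ne (slitPlane_arg_ne_pi hw)⟩
  rw [cpow_def_of_ne_zero (slitPlane_ne_zero hw), exp_re]
  refine mul_pos (Real.exp_pos _) (Real.cos_pos_of_mem_Ioo ?_)
  simp only [mul_im, log_re, log_im]
  norm_num
  constructor <;> linarith [harg.1, harg.2]

lemma hasDerivAt_one_sub_cpow_half {z : ℂ} (hz : 1 - z ∈ slitPlane) :
    HasDerivAt (fun z => (1 - z) ^ (1 / 2 : ℂ)) (-(2 * (1 - z) ^ (1 / 2 : ℂ))⁻¹) z := by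
  refine (((hasDerivAt_id z).const_sub 1).cpow_const hz).congr_deriv ?_
  rw [show (1 / 2 : ℂ) - 1 = -(1 / 2) by norm_num, cpow_neg]
  simp only [id, mul_neg, mul_one, mul_inv]
  ring

lemma one_sub_mem_slitPlane {z : ℂ} (hz : z ∈ ball 0 1) : 1 - z ∈ slitPlane :=
  Or.inl <| by simpa using (re_le_norm z).trans_lt (mem_ball_zero_iff.mp hz)

section SqrtSubstitution

variable {u : ℂ → ℂ} {z : ℂ}

lemma hasDerivAt_inv_of_hasDerivAt_sqrt (hu : HasDerivAt u (-(2 * u z)⁻¹) z) (hu0 : u z ≠ 0) :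
    HasDerivAt (fun w => (u w)⁻¹) ((u z)⁻¹ ^ 3 / 2) z := by
  refine (hu.fun_inv hu0).congr_deriv ?_
  field_simp

lemma hasDerivAt_inv_add_mul_of_hasDerivAt_sqrt {a b : ℝ}
    (hu : HasDerivAt u (-(2 * u z)⁻¹) z) (hu0 : u z ≠ 0) (hv0 : (a : ℂ) + b * u z ≠ 0) :
    HasDerivAt (fun w => ((a : ℂ) + b * u w)⁻¹)
      (b / 2 * (u z)⁻¹ * ((a : ℂ) + b * u z)⁻¹ ^ 2) z := by
  refine ((hu.const_mul (b : ℂ)).const_add (a : ℂ)).fun_inv hv0 |>.congr_deriv ?_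
  field_simp

end SqrtSubstitution

open XYTerm in
theorem taylorCoeff_pos_div_add_mul_sqrt_one_sub {a b c : ℝ} (ha : 0 ≤ a) (hb : 0 < b)
    (hc : 0 < c) :
    DifferentiableOn ℂ (fun z : ℂ => c / (a + b * (1 - z) ^ (1 / 2 : ℂ))) (ball 0 1) ∧
    ∀ n : ℕ, ∃ r : ℝ, 0 < r ∧
      iteratedDeriv n (fun z : ℂ => c / (a + b * (1 - z) ^ (1 / 2 : ℂ))) 0 / n.factorial = r := by
  set u : ℂ → ℂ := fun z => (1 - z) ^ (1 / 2 : ℂ)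
  have hslit : ∀ z ∈ ball (0 : ℂ) 1, 1 - z ∈ slitPlane := fun _ => one_sub_mem_slitPlane
  have hu_re : ∀ z ∈ ball (0 : ℂ) 1, 0 < (u z).re := fun z hz => re_cpow_half_pos (hslit z hz)
  have hu0 : ∀ z ∈ ball (0 : ℂ) 1, u z ≠ 0 := fun z hz => ne_zero_of_re_pos (hu_re z hz)
  have hv0 : ∀ z ∈ ball (0 : ℂ) 1, (a : ℂ) + b * u z ≠ 0 := fun z hz =>
    ne_zero_of_re_pos (by simpa using add_pos_of_nonneg_of_pos ha (mul_pos hb (hu_re z hz)))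
  have hx := fun z hz => hasDerivAt_inv_of_hasDerivAt_sqrt
    (hasDerivAt_one_sub_cpow_half (hslit z hz)) (hu0 z hz)
  have hy := fun z hz => hasDerivAt_inv_add_mul_of_hasDerivAt_sqrt
    (hasDerivAt_one_sub_cpow_half (hslit z hz)) (hu0 z hz) (hv0 z hz)
  have hF : EqOn (fun z : ℂ => c / (a + b * u z))
      (fun z => sumEval [⟨c, 0, 1⟩] (u z)⁻¹ ((a : ℂ) + b * u z)⁻¹) (ball 0 1) := fun z _ => by
    simp [eval, div_eq_mul_inv]
  have hL : Admissible [⟨c, 0, 1⟩] :=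
    ⟨by simpa using hc.le, _, List.mem_singleton_self _, hc, one_pos⟩
  refine ⟨DifferentiableOn.congr (fun z hz => ?_) hF, fun n => ?_⟩
  · exact (hasDerivAt_sumEval (hx z hz) (hy z hz) _).differentiableAt.differentiableWithinAt
  · set L := (derivList b)^[n] [⟨c, 0, 1⟩]
    have hval : ((sumEval L 1 (a + b)⁻¹ : ℝ) : ℂ) = sumEval L ((1 : ℝ) : ℂ) ((a + b)⁻¹ : ℝ) :=
      ofReal_sumEval L _ _
    refine ⟨sumEval L 1 (a + b)⁻¹ / n.factorial,
      div_pos ((hL.iterate_derivList hb n).sumEval_pos one_pos (by positivity)) (by positivity), ?_⟩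
    rw [eqOn_iteratedDeriv isOpen_ball hx hy hF n (mem_ball_self one_pos), ofReal_div, hval]
    simp [L]

open Real

/-- `f(z) = 2/(a + 2^{3/2}√(1-z))` (principal branch, branch cut `[1,∞)`) is
analytic on the open unit disc and all its Taylor coefficients
`cₙ = f⁽ⁿ⁾(0)/n!` are real and positive. -/
theorem generating_function_positive_coefficients (a : ℝ) (ha : 0 < a) :
    DifferentiableOn ℂ
      (fun z : ℂ => 2 / ((a : ℂ) + 2 ^ ((3 : ℂ) / 2) * (1 - z) ^ ((1 : ℂ) / 2)))
      (Metric.ball (0 : ℂ) 1) ∧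
    ∀ n : ℕ, ∃ c : ℝ, 0 < c ∧
      iteratedDeriv n
          (fun z : ℂ => 2 / ((a : ℂ) + 2 ^ ((3 : ℂ) / 2) * (1 - z) ^ ((1 : ℂ) / 2))) 0
        / (n.factorial : ℂ) = (c : ℂ) := by
  have hb : (2 : ℂ) ^ ((3 : ℂ) / 2) = ((2 ^ (3 / 2 : ℝ) : ℝ) : ℂ) := by
    rw [ofReal_cpow zero_le_two]
    norm_num
  simpa only [hb, ofReal_ofNat] using
    taylorCoeff_pos_div_add_mul_sqrt_one_sub ha.le (by positivity : (0 : ℝ) < 2 ^ (3 / 2 : ℝ))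
      two_pos
end

section
/- Let (μ_n) be a sequence of probability measures on the compact space M₁(K) of probability measures on a compact metric space K, and suppose that for every l ≥ 1 the l-th moment measures M_n^{(l)} of μ_n (defined by M_n^{(l)}(A₁×…×A_l) = ∫ ν(A₁)…ν(A_l) dμ_n(ν)) converge weakly to the l-th moment measures of a probability measure μ on M₁(K). Then μ_n converges weakly to μ. -/
open MeasureTheory Filter

noncomputable instance probabilityMeasureMeasurableSpace
    {X : Type*} [MeasurableSpace X] [TopologicalSpace X] [OpensMeasurableSpace X] :
    MeasurableSpace (ProbabilityMeasure X) := borel _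

instance probabilityMeasureBorelSpace
    {X : Type*} [MeasurableSpace X] [TopologicalSpace X] [OpensMeasurableSpace X] :
    BorelSpace (ProbabilityMeasure X) := ⟨rfl⟩

/-- The `l`-th moment measure of a random probability measure with law `μ`:
the measure on `K^l` obtained by averaging `ν^{⊗l}` over `ν ∼ μ`. -/
noncomputable def momentMeasure {K : Type*} [MeasurableSpace K] [TopologicalSpace K]
    [OpensMeasurableSpace K]
    (μ : Measure (ProbabilityMeasure K)) (l : ℕ) : Measure (Fin l → K) :=
  μ.bind fun ν => Measure.pi fun _ : Fin l => (ν : Measure K)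

/-! The functions `ν ↦ ∏ᵢ ∫ gᵢ dν` on the compact space of probability measures on `K` span a
subalgebra of `C(ProbabilityMeasure K, ℝ)` that separates points, and the integral of such a
function against a law `μ` is the integral of `x ↦ ∏ᵢ gᵢ (xᵢ)` against the moment measures of `μ`.
Convergence of the moment measures thus gives convergence of `∫ Φ dμₙ` for every `Φ` in this
subalgebra, and by Stone–Weierstrass for every continuous `Φ`. -/

open scoped Topology BoundedContinuousFunction

namespace MeasureTheory

theorem Measure.integral_bind {α β E : Type*} [MeasurableSpace α] [MeasurableSpace β]
    [NormedAddCommGroup E] [NormedSpace ℝ E] {m : Measure α} {κ : α → Measure β}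
    (hκ : Measurable κ) {f : β → E} (hf : Integrable f (m.bind κ)) :
    ∫ x, f x ∂(m.bind κ) = ∫ a, ∫ x, f x ∂(κ a) ∂m := by
  let k : ProbabilityTheory.Kernel α β := ⟨κ, hκ⟩
  change Integrable f (m.bind k) at hf
  change ∫ x, f x ∂(m.bind k) = ∫ a, ∫ x, f x ∂(k a) ∂m
  rw [Measure.comp_eq_comp_const_apply] at hf ⊢
  simpa using ProbabilityTheory.Kernel.integral_comp hf

theorem Measurable.measure_pi {α ι : Type*} [Fintype ι] {β : ι → Type*} [MeasurableSpace α]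
    [∀ i, MeasurableSpace (β i)] {κ : ∀ i, α → Measure (β i)}
    [∀ i a, IsProbabilityMeasure (κ i a)] (hκ : ∀ i, Measurable (κ i)) :
    Measurable fun a => Measure.pi fun i => κ i a := by
  refine .measure_of_isPiSystem_of_isProbabilityMeasure generateFrom_pi.symm isPiSystem_pi ?_
  rintro _ ⟨t, ht, rfl⟩
  simp_rw [Measure.pi_pi]
  exact Finset.measurable_prod _ fun i _ => (Measure.measurable_coe (ht i trivial)).comp (hκ i)

namespace ProbabilityMeasure

section CompactSpace

variable {E : Type*} [TopologicalSpace E] [CompactSpace E] [MeasurableSpace E]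
  [OpensMeasurableSpace E]

theorem dist_integral_le_of_forall_dist_le (ν : ProbabilityMeasure E) {f g : E → ℝ}
    (hf : Continuous f) (hg : Continuous g) {ε : ℝ} (hfg : ∀ x, dist (f x) (g x) ≤ ε) :
    dist (∫ x, f x ∂ν) (∫ x, g x ∂ν) ≤ ε := by
  have hint : ∀ {h : E → ℝ}, Continuous h → Integrable h (ν : Measure E) := fun hh =>
    hh.integrable_of_hasCompactSupport (HasCompactSupport.of_compactSpace _)
  rw [dist_eq_norm, ← integral_sub (hint hf) (hint hg)]
  calc ‖∫ x, f x - g x ∂(ν : Measure E)‖ ≤ ε * (ν : Measure E).real Set.univ :=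
        norm_integral_le_of_norm_le_const
          (Eventually.of_forall fun x => (dist_eq_norm (f x) (g x)) ▸ hfg x)
    _ = ε := by simp

theorem tendsto_of_forall_mem_subalgebra_integral_tendsto {ι : Type*} {L : Filter ι}
    {P : ι → ProbabilityMeasure E} {Q : ProbabilityMeasure E} {A : Subalgebra ℝ C(E, ℝ)}
    (hA : A.SeparatesPoints)
    (h : ∀ g ∈ A,
      Tendsto (fun i => ∫ x, g x ∂(P i : Measure E)) L (𝓝 (∫ x, g x ∂(Q : Measure E)))) :
    Tendsto P L (𝓝 Q) := by
  refine tendsto_iff_forall_integral_tendsto.2 fun f => Metric.tendsto_nhds.2 fun ε hε => ?_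
  obtain ⟨g, hg⟩ := ContinuousMap.exists_mem_subalgebra_near_continuous_of_separatesPoints A hA
    f f.continuous (ε / 3) (by positivity)
  have hfg (ν : ProbabilityMeasure E) : dist (∫ x, f x ∂ν) (∫ x, (g : C(E, ℝ)) x ∂ν) ≤ ε / 3 :=
    dist_integral_le_of_forall_dist_le ν f.continuous (g : C(E, ℝ)).continuous fun x => by
      rw [dist_comm, dist_eq_norm]; exact (hg x).le
  filter_upwards [Metric.tendsto_nhds.1 (h g g.2) (ε / 3) (by positivity)] with i hi
  calc dist (∫ x, f x ∂(P i : Measure E)) (∫ x, f x ∂(Q : Measure E))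
      ≤ dist (∫ x, f x ∂(P i : Measure E)) (∫ x, (g : C(E, ℝ)) x ∂(P i : Measure E))
        + dist (∫ x, (g : C(E, ℝ)) x ∂(P i : Measure E)) (∫ x, (g : C(E, ℝ)) x ∂(Q : Measure E))
        + dist (∫ x, (g : C(E, ℝ)) x ∂(Q : Measure E)) (∫ x, f x ∂(Q : Measure E)) :=
        dist_triangle4 _ _ _ _
    _ < ε := by
        have hP := hfg (P i)
        have hQ := hfg Q
        rw [dist_comm] at hQ
        linarith

end CompactSpace

section Moments

variable {K : Type*} [TopologicalSpace K] [MeasurableSpace K]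

-- The σ-algebra on `ProbabilityMeasure K` in force here is the Borel one of the weak topology.
theorem measurable_toMeasure [HasOuterApproxClosed K] [BorelSpace K] :
    Measurable (fun ν : ProbabilityMeasure K => (ν : Measure K)) := by
  refine .measure_of_isPiSystem_of_isProbabilityMeasure
    (borel_eq_generateFrom_isClosed.symm.trans BorelSpace.measurable_eq.symm).symm
    isPiSystem_isClosed fun F hF => ?_
  -- `ν F` is the limit of the integrals of continuous functions decreasing to the indicator of `F`
  exact ENNReal.measurable_of_tendsto' atTop
    (fun n => (continuous_lintegral_boundedContinuousFunction (hF.apprSeq n)).measurable)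
    (tendsto_pi_nhds.2 fun ν => HasOuterApproxClosed.tendsto_lintegral_apprSeq hF ν)

variable [OpensMeasurableSpace K]

noncomputable def integralContinuousMap (g : K →ᵇ ℝ) : C(ProbabilityMeasure K, ℝ) :=
  ⟨fun ν => ∫ x, g x ∂(ν : Measure K), continuous_integral_boundedContinuousFunction g⟩

variable (K) in
noncomputable def momentMonomials : Submonoid C(ProbabilityMeasure K, ℝ) where
  carrier := {Φ | ∃ (l : ℕ) (g : Fin l → K →ᵇ ℝ), Φ = ∏ i, integralContinuousMap (g i)}
  one_mem' := ⟨0, Fin.elim0, by simp⟩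
  mul_mem' := by
    rintro _ _ ⟨l, g, rfl⟩ ⟨m, h, rfl⟩
    exact ⟨l + m, Fin.append g h, by simp [Fin.prod_univ_add]⟩

variable (K) in
noncomputable def momentAlgebra : Subalgebra ℝ C(ProbabilityMeasure K, ℝ) :=
  Algebra.adjoin ℝ (Set.range integralContinuousMap)

theorem momentAlgebra_separatesPoints [HasOuterApproxClosed K] [BorelSpace K] :
    (momentAlgebra K).SeparatesPoints := by
  intro ν₁ ν₂ hne
  obtain ⟨g, hg⟩ : ∃ g : K →ᵇ ℝ, ∫ x, g x ∂(ν₁ : Measure K) ≠ ∫ x, g x ∂(ν₂ : Measure K) := by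
    by_contra! h
    exact hne (toMeasure_injective (ext_of_forall_integral_eq_of_IsFiniteMeasure h))
  exact ⟨_, ⟨integralContinuousMap g, Algebra.subset_adjoin ⟨g, rfl⟩, rfl⟩, hg⟩

theorem momentAlgebra_le_span_momentMonomials :
    Subalgebra.toSubmodule (momentAlgebra K) ≤ Submodule.span ℝ (momentMonomials K) := by
  rw [momentAlgebra, Algebra.adjoin_eq_span]
  refine Submodule.span_mono (Submonoid.closure_le.2 ?_)
  rintro _ ⟨g, rfl⟩
  exact ⟨1, fun _ => g, by simp⟩

instance isProbabilityMeasure_momentMeasure [HasOuterApproxClosed K] [BorelSpace K]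
    (P : Measure (ProbabilityMeasure K)) [IsProbabilityMeasure P] (l : ℕ) :
    IsProbabilityMeasure (momentMeasure P l) := by
  constructor
  rw [momentMeasure, Measure.bind_apply .univ
    (Measurable.measure_pi fun _ => measurable_toMeasure).aemeasurable]
  simp

theorem integral_momentMeasure_prod [HasOuterApproxClosed K] [SecondCountableTopology K]
    [BorelSpace K] (P : Measure (ProbabilityMeasure K)) [IsProbabilityMeasure P] {l : ℕ}
    (g : Fin l → K →ᵇ ℝ) :
    ∫ x, (∏ i, (g i).compContinuous (ContinuousMap.eval i)) x ∂(momentMeasure P l)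
      = ∫ ν, (∏ i, integralContinuousMap (g i)) ν ∂P := by
  have hint := (∏ i, (g i).compContinuous (ContinuousMap.eval i)).integrable (momentMeasure P l)
  rw [momentMeasure] at hint ⊢
  rw [Measure.integral_bind (Measurable.measure_pi fun _ => measurable_toMeasure) hint]
  refine integral_congr_ae (Eventually.of_forall fun ν => ?_)
  simpa [integralContinuousMap] using
    integral_fintype_prod_eq_prod (fun i y => g i y) (μ := fun _ => (ν : Measure K))

theorem tendsto_integral_of_mem_momentMonomials [HasOuterApproxClosed K]
    [SecondCountableTopology K] [BorelSpace K] {ι : Type*} {L : Filter ι}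
    {P : ι → Measure (ProbabilityMeasure K)} [∀ i, IsProbabilityMeasure (P i)]
    {Q : Measure (ProbabilityMeasure K)} [IsProbabilityMeasure Q]
    (hmom : ∀ l : ℕ, 1 ≤ l → ∀ f : (Fin l → K) →ᵇ ℝ,
      Tendsto (fun i => ∫ x, f x ∂(momentMeasure (P i) l)) L (𝓝 (∫ x, f x ∂(momentMeasure Q l))))
    {Φ : C(ProbabilityMeasure K, ℝ)} (hΦ : Φ ∈ momentMonomials K) :
    Tendsto (fun i => ∫ ν, Φ ν ∂(P i)) L (𝓝 (∫ ν, Φ ν ∂Q)) := by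
  obtain ⟨l, g, rfl⟩ := hΦ
  rcases l.eq_zero_or_pos with rfl | hl
  · simpa using tendsto_const_nhds
  · simpa only [← integral_momentMeasure_prod] using hmom l hl _

theorem tendsto_integral_of_mem_momentAlgebra [T2Space K] [CompactSpace K]
    [HasOuterApproxClosed K] [SecondCountableTopology K] [BorelSpace K] {ι : Type*} {L : Filter ι}
    {P : ι → Measure (ProbabilityMeasure K)} [∀ i, IsProbabilityMeasure (P i)]
    {Q : Measure (ProbabilityMeasure K)} [IsProbabilityMeasure Q]
    (hmom : ∀ l : ℕ, 1 ≤ l → ∀ f : (Fin l → K) →ᵇ ℝ,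
      Tendsto (fun i => ∫ x, f x ∂(momentMeasure (P i) l)) L (𝓝 (∫ x, f x ∂(momentMeasure Q l))))
    {Φ : C(ProbabilityMeasure K, ℝ)} (hΦ : Φ ∈ momentAlgebra K) :
    Tendsto (fun i => ∫ ν, Φ ν ∂(P i)) L (𝓝 (∫ ν, Φ ν ∂Q)) := by
  have hint (Ψ : C(ProbabilityMeasure K, ℝ)) (R : Measure (ProbabilityMeasure K))
      [IsProbabilityMeasure R] : Integrable Ψ R :=
    Ψ.continuous.integrable_of_hasCompactSupport (HasCompactSupport.of_compactSpace _)
  replace hΦ := momentAlgebra_le_span_momentMonomials hΦ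
  induction hΦ using Submodule.span_induction with
  | mem Ψ hΨ => exact tendsto_integral_of_mem_momentMonomials hmom hΨ
  | zero => simpa using tendsto_const_nhds
  | add Ψ Ψ' _ _ hΨ hΨ' =>
    simpa only [ContinuousMap.add_apply, integral_add (hint Ψ _) (hint Ψ' _)] using hΨ.add hΨ'
  | smul c Ψ _ hΨ =>
    simpa only [ContinuousMap.smul_apply, integral_smul] using hΨ.const_smul c

end Moments

end ProbabilityMeasure

end MeasureTheory

/-- If all moment measures of a sequence of random probability measures on a
compact metric space converge weakly to those of `μ`, then the laws `μₙ`
converge weakly to `μ`. -/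
theorem weak_convergence_of_moment_measures
    {K : Type*} [MetricSpace K] [CompactSpace K] [MeasurableSpace K] [BorelSpace K]
    (μn : ℕ → ProbabilityMeasure (ProbabilityMeasure K))
    (μ : ProbabilityMeasure (ProbabilityMeasure K))
    (hmom : ∀ l : ℕ, 1 ≤ l → ∀ f : BoundedContinuousFunction (Fin l → K) ℝ,
      Tendsto (fun n => ∫ x, f x ∂(momentMeasure (μn n : Measure (ProbabilityMeasure K)) l))
        atTop (nhds (∫ x, f x ∂(momentMeasure (μ : Measure (ProbabilityMeasure K)) l)))) :
    Tendsto μn atTop (nhds μ) :=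
  ProbabilityMeasure.tendsto_of_forall_mem_subalgebra_integral_tendsto
    ProbabilityMeasure.momentAlgebra_separatesPoints
    fun _ hΦ => ProbabilityMeasure.tendsto_integral_of_mem_momentAlgebra hmom hΦ
end
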